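/- Let $\mathbf{y}^{[1]}(t,x)$ solve the backward linear ODE $\mathbf{y}^{[1]}(t,x) = \partial_x u(\chi(t_i,x)) + \int_t^{t_i} [\partial_x b(r,\chi(r,x))]\,\mathbf{y}^{[1]}(r,x)\,dr$ on $[t_{i-1},t_i]$, where $\chi$ solves $\chi(t,x)=x+\int_{t_{i-1}}^t b(r,\chi(r,x))dr$, $u$ has bounded derivatives up to order 2, and $b$ has bounded first derivatives that are $1/2$-Hölder in $t$ and Lipschitz in $x$. Let $\bar{\mathbf{y}}^{[1]}(t,x) := \partial_x u(\bar\chi(t_i,x)) + (t_i-t)[\partial_x b(t_i,\bar\chi(t_i,x))]\partial_x u(\bar\chi(t_i,x))$ with $\bar\chi(t,x)=x+(t-t_{i-1})b(t_{i-1},x)$. Then $\sup_{t\in[t_{i-1},t_i]}|\mathbf{y}^{[1]}(t,x)-\bar{\mathbf{y}}^{[1]}(t,x)| \le C\,h_i^{3/2}\,(1+|x|\sqrt{h_i})\,e^{K h_i}$ for some constant $C$ depending only on the bounds on $u$, $b$ and their derivatives, where $h_i=t_i-t_{i-1}$. -/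

import Mathlib

open Real Set intervalIntegral

open Filter Topology

lemma continuous_of_halfHolder {E F : Type*} [NormedAddCommGroup E] [NormedAddCommGroup F]
    (K : ℝ) (f : ℝ → E → F)
    (h : ∀ t t' x x', ‖f t x - f t' x'‖ ≤ K * (|t - t'| ^ ((1:ℝ)/2) + ‖x - x'‖)) :
    Continuous (fun p : ℝ × E => f p.1 p.2) := by
  rw [continuous_iff_continuousAt]
  intro p
  unfold ContinuousAt
  rw [tendsto_iff_dist_tendsto_zero]
  have hg : Tendsto (fun q : ℝ × E => K * (Real.sqrt |q.1 - p.1| + ‖q.2 - p.2‖)) (𝓝 p) (𝓝 0) := by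
    have : Continuous (fun q : ℝ × E => K * (Real.sqrt |q.1 - p.1| + ‖q.2 - p.2‖)) := by
      fun_prop
    have h0 : (fun q : ℝ × E => K * (Real.sqrt |q.1 - p.1| + ‖q.2 - p.2‖)) p = 0 := by
      simp
    simpa [h0] using this.tendsto p
  refine squeeze_zero (fun q => dist_nonneg) (fun q => ?_) hg
  rw [dist_eq_norm]
  calc ‖f q.1 q.2 - f p.1 p.2‖ ≤ K * (|q.1 - p.1| ^ ((1:ℝ)/2) + ‖q.2 - p.2‖) := h _ _ _ _
    _ = K * (Real.sqrt |q.1 - p.1| + ‖q.2 - p.2‖) := by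
        rw [Real.sqrt_eq_rpow]
open Real Set intervalIntegral Filter Topology

lemma gronwall_integral {f : ℝ → ℝ} {a c A Kc : ℝ} (hac : a ≤ c)
    (hf : ContinuousOn f (Icc a c)) (hKc : 0 ≤ Kc)
    (hineq : ∀ t ∈ Icc a c, f t ≤ A + Kc * ∫ r in t..c, f r) :
    ∀ t ∈ Icc a c, f t ≤ A * Real.exp (Kc * (c - t)) := by
  obtain ⟨z, hz, hmax⟩ := isCompact_Icc.exists_isMaxOn (nonempty_Icc.2 hac) hf
  set M := f z with hM
  have hfM : ∀ r ∈ Icc a c, f r ≤ M := fun r hr => hmax hr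
  have hpowint : ∀ (j : ℕ) (t : ℝ), (∫ r in t..c, (c - r) ^ j) = (c - t) ^ (j+1) / (j+1) := by
    intro j t
    rw [intervalIntegral.integral_comp_sub_left (fun u => u ^ j) c]
    simp [integral_pow]
  have key : ∀ n : ℕ, ∀ t ∈ Icc a c,
      f t ≤ A * ∑ j ∈ Finset.range n, (Kc * (c - t)) ^ j / j.factorial
            + M * ((Kc * (c - t)) ^ n / n.factorial) := by
    intro n
    induction n with
    | zero => intro t ht; simpa using hfM t ht
    | succ n ih =>
      intro t ht
      have hsub : Icc t c ⊆ Icc a c := Icc_subset_Icc ht.1 le_rfl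
      have huIcc : uIcc t c = Icc t c := uIcc_of_le ht.2
      have hfi : IntervalIntegrable f MeasureTheory.volume t c :=
        ((hf.mono hsub).mono (by rw [huIcc])).intervalIntegrable
      set g : ℝ → ℝ := fun r => A * ∑ j ∈ Finset.range n, (Kc * (c - r)) ^ j / j.factorial
            + M * ((Kc * (c - r)) ^ n / n.factorial) with hg
      have hgc : Continuous g := by fun_prop
      have hgi : IntervalIntegrable g MeasureTheory.volume t c := hgc.intervalIntegrable t c
      have hmono : (∫ r in t..c, f r) ≤ ∫ r in t..c, g r :=
        intervalIntegral.integral_mono_on ht.2 hfi hgi (fun r hr => ih r (hsub hr))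
      have hgval : (∫ r in t..c, g r)
          = A * ∑ j ∈ Finset.range n, Kc ^ j * ((c - t) ^ (j+1) / (j+1)) / j.factorial
            + M * (Kc ^ n * ((c - t) ^ (n+1) / (n+1)) / n.factorial) := by
        have hrw : ∀ r, g r = (∑ j ∈ Finset.range n,
              (A * Kc ^ j / j.factorial) * (c - r) ^ j)
            + (M * Kc ^ n / n.factorial) * (c - r) ^ n := by
          intro r
          rw [hg]
          simp only [Finset.mul_sum, mul_pow]
          congr 1
          · exact Finset.sum_congr rfl fun j _ => by ring
          · ring
        simp only [hrw]
        rw [intervalIntegral.integral_add]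
        · rw [intervalIntegral.integral_finset_sum]
          · simp only [intervalIntegral.integral_const_mul, hpowint]
            congr 1
            · rw [Finset.mul_sum]
              exact Finset.sum_congr rfl fun j _ => by push_cast; ring
            · push_cast; ring
          · intro j hj
            exact (Continuous.intervalIntegrable (by fun_prop) t c)
        · exact ((Continuous.intervalIntegrable (by fun_prop) t c))
        · exact ((Continuous.intervalIntegrable (by fun_prop) t c))
      calc f t ≤ A + Kc * ∫ r in t..c, f r := hineq t ht
        _ ≤ A + Kc * ∫ r in t..c, g r := by nlinarith [hmono]
        _ = A * ∑ j ∈ Finset.range (n+1), (Kc * (c - t)) ^ j / j.factorial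
            + M * ((Kc * (c - t)) ^ (n+1) / (n+1).factorial) := by
            have h1 : ∀ j : ℕ, Kc * (A * (Kc ^ j * ((c - t) ^ (j+1) / ((j:ℝ)+1)) / j.factorial))
                = A * ((Kc * (c - t)) ^ (j+1) / ((j+1).factorial : ℝ)) := by
              intro j
              have hj1 : ((j:ℝ) + 1) ≠ 0 := by positivity
              have hj2 : ((j.factorial : ℝ)) ≠ 0 := by positivity
              rw [Nat.factorial_succ, mul_pow, pow_succ]; push_cast; field_simp; ring
            have h2 : Kc * (M * (Kc ^ n * ((c - t) ^ (n+1) / ((n:ℝ)+1)) / n.factorial))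
                = M * ((Kc * (c - t)) ^ (n+1) / ((n+1).factorial : ℝ)) := by
              have hj1 : ((n:ℝ) + 1) ≠ 0 := by positivity
              have hj2 : ((n.factorial : ℝ)) ≠ 0 := by positivity
              rw [Nat.factorial_succ, mul_pow, pow_succ]; push_cast; field_simp; ring
            rw [hgval, Finset.sum_range_succ', mul_add, Finset.mul_sum, Finset.mul_sum]
            simp only [h1, h2, pow_zero, Nat.factorial_zero, Nat.cast_one, div_one]
            rw [mul_add, Finset.mul_sum, mul_one]
            ring
  intro t ht
  set y := Kc * (c - t) with hy
  have hlim1 : Tendsto (fun n => A * ∑ j ∈ Finset.range n, y ^ j / j.factorial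
      + M * (y ^ n / n.factorial)) atTop (𝓝 (A * Real.exp y + M * 0)) := by
    apply Tendsto.add
    · rw [Real.exp_eq_exp_ℝ]
      exact ((NormedSpace.expSeries_div_hasSum_exp y).tendsto_sum_nat).const_mul A
    · exact (FloorSemiring.tendsto_pow_div_factorial_atTop y).const_mul M
  have := ge_of_tendsto' hlim1 (fun n => key n t ht)
  simpa using this

set_option maxHeartbeats 2000000 in
/-- **One-step Euler error for the first-order coefficient ODE.**
`y^{[1]}` solves the backward linear ODE driven by the Jacobian of `b` along the
flow `χ`, while `ȳ^{[1]}` is its one-step Euler approximation along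
`χ̄(t,x) = x + (t-t₀)b(t₀,x)`.  Then
`sup_t ‖y^{[1]}(t,x) - ȳ^{[1]}(t,x)‖ ≤ C h^{3/2}(1+|x|√h)e^{Kh}`. -/
theorem first_order_coefficient_euler_error
    {d : ℕ} (K K' : ℝ) (hK : 0 < K) (hK' : 0 < K') :
    ∃ C : ℝ, 0 < C ∧
      ∀ t₀ ti : ℝ, t₀ ≤ ti →
      ∀ b : ℝ → (Fin d → ℝ) → (Fin d → ℝ),
      (∀ t t' x x', ‖b t x - b t' x'‖ ≤ K * (|t - t'| ^ ((1:ℝ)/2) + ‖x - x'‖)) →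
      (∀ t, ‖b t 0‖ ≤ K) →
      (∀ t, Differentiable ℝ (b t)) →
      (∀ t x, ‖fderiv ℝ (b t) x‖ ≤ K) →
      (∀ t t' x x', ‖fderiv ℝ (b t) x - fderiv ℝ (b t') x'‖
          ≤ K * (|t - t'| ^ ((1:ℝ)/2) + ‖x - x'‖)) →
      -- `Du = ∂_x u`, bounded and Lipschitz (bounded second derivative of `u`)
      ∀ Du : (Fin d → ℝ) → (Fin d → ℝ),
      (∀ z, ‖Du z‖ ≤ K') → (∀ z z', ‖Du z - Du z'‖ ≤ K' * ‖z - z'‖) →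
      ∀ x : Fin d → ℝ,
      -- the flow `χ` of the ODE `χ' = b(t,χ)`
      ∀ χ : ℝ → (Fin d → ℝ), ContinuousOn χ (Icc t₀ ti) →
      (∀ t ∈ Icc t₀ ti, χ t = x + ∫ r in t₀..t, b r (χ r)) →
      -- the first-order coefficient `y^{[1]}`
      ∀ y1 : ℝ → (Fin d → ℝ), ContinuousOn y1 (Icc t₀ ti) →
      (∀ t ∈ Icc t₀ ti,
        y1 t = Du (χ ti) + ∫ r in t..ti, (fderiv ℝ (b r) (χ r)) (y1 r)) →
      -- its one-step Euler approximation `ȳ^{[1]}`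
      ∀ ybar : ℝ → (Fin d → ℝ),
      (∀ t, ybar t
        = Du (x + (ti - t₀) • b t₀ x)
          + (ti - t) • (fderiv ℝ (b ti) (x + (ti - t₀) • b t₀ x))
              (Du (x + (ti - t₀) • b t₀ x))) →
      ∀ t ∈ Icc t₀ ti,
        ‖y1 t - ybar t‖
          ≤ C * (ti - t₀) ^ ((3:ℝ)/2) * (1 + ‖x‖ * Real.sqrt (ti - t₀))
              * Real.exp (K * (ti - t₀)) := by
  set h₀ : ℝ := min 1 (1/(2*K)) with hh₀def
  have hh₀pos : 0 < h₀ := lt_min one_pos (by positivity)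
  clear_value h₀
  set C₁ : ℝ := 3*K'*K + 11*K'*K^2 + 2*K'*K^3 with hC₁def
  have hC₁pos : 0 < C₁ := by positivity
  clear_value C₁
  have hCbig : 0 ≤ 2*K'/h₀^((3:ℝ)/2) := div_nonneg (by positivity) (Real.rpow_nonneg hh₀pos.le _)
  refine ⟨C₁ + 2*K'/h₀^((3:ℝ)/2) + 1, by linarith, ?_⟩
  intro t₀ ti hti b hbmod hb0 hbdiff hbK hDbmod Du hDubd hDulip x χ hχc hχeq y1 hy1c hy1eq
    ybar hybar t ht
  have hbcont : Continuous (fun p : ℝ × (Fin d → ℝ) => b p.1 p.2) :=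
    continuous_of_halfHolder K b hbmod
  have hDbcont : Continuous (fun p : ℝ × (Fin d → ℝ) => fderiv ℝ (b p.1) p.2) :=
    continuous_of_halfHolder K _ hDbmod
  have hχpair : ContinuousOn (fun r => ((r, χ r) : ℝ × (Fin d → ℝ))) (Icc t₀ ti) :=
    continuousOn_id.prodMk hχc
  have hbχ : ContinuousOn (fun r => b r (χ r)) (Icc t₀ ti) := hbcont.comp_continuousOn hχpair
  have hDbχ : ContinuousOn (fun r => fderiv ℝ (b r) (χ r)) (Icc t₀ ti) :=
    hDbcont.comp_continuousOn hχpair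
  have hGc : ContinuousOn (fun r => (fderiv ℝ (b r) (χ r)) (y1 r)) (Icc t₀ ti) :=
    hDbχ.clm_apply hy1c
  set hh := ti - t₀ with hhdef
  have hhnn : 0 ≤ hh := sub_nonneg.2 hti
  have hxnn : 0 ≤ ‖x‖ := norm_nonneg x
  have hbbd : ∀ (u : ℝ) (y : Fin d → ℝ), ‖b u y‖ ≤ K * (1 + ‖y‖) := by
    intro u y
    calc ‖b u y‖ ≤ ‖b u y - b u 0‖ + ‖b u 0‖ := by
          simpa using norm_add_le (b u y - b u 0) (b u 0)
      _ ≤ K * (|u - u| ^ ((1:ℝ)/2) + ‖y - 0‖) + K := add_le_add (hbmod u u y 0) (hb0 u)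
      _ = K * (1 + ‖y‖) := by
          rw [sub_self, abs_zero, Real.zero_rpow (by norm_num), sub_zero]; ring
  set s := Real.sqrt hh with hsdef
  have hs2 : s^2 = hh := Real.sq_sqrt hhnn
  have hsnn : 0 ≤ s := Real.sqrt_nonneg hh
  have h32 : hh ^ ((3:ℝ)/2) = s ^ 3 := by
    rw [hsdef, Real.sqrt_eq_rpow, ← Real.rpow_natCast (hh ^ ((1:ℝ)/2)) 3, ← Real.rpow_mul hhnn]
    norm_num
  have hexp1 : 1 ≤ Real.exp (K * hh) := Real.one_le_exp (mul_nonneg hK.le hhnn)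
  clear_value hh s
  rcases le_or_gt hh h₀ with hcase | hcase
  · -- small step size
    have hh1 : hh ≤ 1 := le_trans hcase (by rw [hh₀def]; exact min_le_left _ _)
    have hKh : K * hh ≤ 1/2 := by
      have h1 : hh ≤ 1/(2*K) := le_trans hcase (by rw [hh₀def]; exact min_le_right _ _)
      have h2 := mul_le_mul_of_nonneg_left h1 hK.le
      rw [mul_one_div] at h2
      have h3 : K / (2*K) = 1/2 := by
        rw [div_eq_iff (by positivity : (2:ℝ)*K ≠ 0)]; ring
      linarith [h2, h3.le]
    have hs1 : s ≤ 1 := by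
      rw [hsdef, show (1:ℝ) = Real.sqrt 1 by rw [Real.sqrt_one]]
      exact Real.sqrt_le_sqrt hh1
    -- (a) bound on the flow
    obtain ⟨z, hz, hmax⟩ := isCompact_Icc.exists_isMaxOn (nonempty_Icc.2 hti)
      ((hχc.sub continuousOn_const).norm)
    have hMnn : 0 ≤ ‖χ z - x‖ := norm_nonneg _
    have hkeyz : ∀ r ∈ Icc t₀ ti, ‖χ r - x‖ ≤ hh * (K * (1 + ‖x‖ + ‖χ z - x‖)) := by
      intro r hr
      have heq : χ r - x = ∫ u in t₀..r, b u (χ u) := by rw [hχeq r hr]; abel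
      rw [heq]
      have hb : ∀ u ∈ Set.uIoc t₀ r, ‖b u (χ u)‖ ≤ K * (1 + ‖x‖ + ‖χ z - x‖) := by
        intro u hu
        rw [uIoc_of_le hr.1] at hu
        have hu' : u ∈ Icc t₀ ti := ⟨hu.1.le, le_trans hu.2 hr.2⟩
        have h1 : ‖χ u‖ ≤ ‖x‖ + ‖χ u - x‖ := by simpa using norm_add_le x (χ u - x)
        have h2 : ‖χ u - x‖ ≤ ‖χ z - x‖ := hmax hu'
        calc ‖b u (χ u)‖ ≤ K * (1 + ‖χ u‖) := hbbd u (χ u)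
          _ ≤ K * (1 + ‖x‖ + ‖χ z - x‖) := by nlinarith [hK.le]
      calc ‖∫ u in t₀..r, b u (χ u)‖ ≤ (K * (1 + ‖x‖ + ‖χ z - x‖)) * |r - t₀| :=
            intervalIntegral.norm_integral_le_of_norm_le_const hb
        _ ≤ hh * (K * (1 + ‖x‖ + ‖χ z - x‖)) := by
            rw [abs_of_nonneg (sub_nonneg.2 hr.1)]
            have h4 : r - t₀ ≤ hh := by rw [hhdef]; linarith [hr.2]
            have h5 : 0 ≤ K * (1 + ‖x‖ + ‖χ z - x‖) := by positivity
            calc (K * (1 + ‖x‖ + ‖χ z - x‖)) * (r - t₀)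
                ≤ (K * (1 + ‖x‖ + ‖χ z - x‖)) * hh := mul_le_mul_of_nonneg_left h4 h5
              _ = hh * (K * (1 + ‖x‖ + ‖χ z - x‖)) := mul_comm _ _
    have hχbd : ∀ r ∈ Icc t₀ ti, ‖χ r - x‖ ≤ 2*K*hh*(1+‖x‖) := by
      have hz2 := hkeyz z hz
      intro r hr
      have h1 : ‖χ r - x‖ ≤ ‖χ z - x‖ := hmax hr
      linarith [hz2, h1, mul_le_mul_of_nonneg_right hKh hMnn]
    -- (b) Euler error for the flow
    have hbint : IntervalIntegrable (fun u => b u (χ u)) MeasureTheory.volume t₀ ti :=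
      (hbχ.mono (by rw [uIcc_of_le hti])).intervalIntegrable
    set χb : Fin d → ℝ := x + hh • b t₀ x with hχbdef
    clear_value χb
    have hEχ : ‖χ ti - χb‖ ≤ K*hh*s + 2*K^2*hh^2*(1+‖x‖) := by
      have heq : χ ti - χb = ∫ u in t₀..ti, (b u (χ u) - b t₀ x) := by
        rw [intervalIntegral.integral_sub hbint intervalIntegrable_const,
            intervalIntegral.integral_const, hχeq ti ⟨hti, le_rfl⟩, hχbdef, ← hhdef]
        abel
      rw [heq]
      have hb : ∀ u ∈ Set.uIoc t₀ ti, ‖b u (χ u) - b t₀ x‖ ≤ K * (s + 2*K*hh*(1+‖x‖)) := by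
        intro u hu
        rw [uIoc_of_le hti] at hu
        have hu' : u ∈ Icc t₀ ti := ⟨hu.1.le, hu.2⟩
        have h1 : |u - t₀| ^ ((1:ℝ)/2) ≤ s := by
          rw [← Real.sqrt_eq_rpow, hsdef]
          apply Real.sqrt_le_sqrt
          rw [abs_of_nonneg (by linarith [hu.1.le] : (0:ℝ) ≤ u - t₀)]
          rw [hhdef]; linarith [hu.2]
        have h2 := hχbd u hu'
        calc ‖b u (χ u) - b t₀ x‖ ≤ K * (|u - t₀| ^ ((1:ℝ)/2) + ‖χ u - x‖) :=
              hbmod u t₀ (χ u) x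
          _ ≤ K * (s + 2*K*hh*(1+‖x‖)) :=
              mul_le_mul_of_nonneg_left (add_le_add h1 h2) hK.le
      calc ‖∫ u in t₀..ti, (b u (χ u) - b t₀ x)‖ ≤ (K * (s + 2*K*hh*(1+‖x‖))) * |ti - t₀| :=
            intervalIntegral.norm_integral_le_of_norm_le_const hb
        _ = K*hh*s + 2*K^2*hh^2*(1+‖x‖) := by
            rw [show |ti - t₀| = hh by rw [← hhdef, abs_of_nonneg hhnn]]
            ring
    -- (c) bound on y1
    obtain ⟨w, hw, hwmax⟩ := isCompact_Icc.exists_isMaxOn (nonempty_Icc.2 hti) hy1c.norm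
    have hMynn : 0 ≤ ‖y1 w‖ := norm_nonneg _
    have hintbd : ∀ r ∈ Icc t₀ ti, ∀ My : ℝ, (∀ u ∈ Icc t₀ ti, ‖y1 u‖ ≤ My) →
        ‖y1 r - Du (χ ti)‖ ≤ K * My * hh := by
      intro r hr My hMy
      have hMy0 : 0 ≤ My := le_trans (norm_nonneg _) (hMy r hr)
      have heq : y1 r - Du (χ ti) = ∫ u in r..ti, (fderiv ℝ (b u) (χ u)) (y1 u) := by
        rw [hy1eq r hr]; abel
      rw [heq]
      have hb : ∀ u ∈ Set.uIoc r ti, ‖(fderiv ℝ (b u) (χ u)) (y1 u)‖ ≤ K * My := by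
        intro u hu
        rw [uIoc_of_le hr.2] at hu
        have hu' : u ∈ Icc t₀ ti := ⟨le_trans hr.1 hu.1.le, hu.2⟩
        calc ‖(fderiv ℝ (b u) (χ u)) (y1 u)‖ ≤ ‖fderiv ℝ (b u) (χ u)‖ * ‖y1 u‖ :=
              ContinuousLinearMap.le_opNorm _ _
          _ ≤ K * My := mul_le_mul (hbK u (χ u)) (hMy u hu') (norm_nonneg _) hK.le
      calc ‖∫ u in r..ti, (fderiv ℝ (b u) (χ u)) (y1 u)‖ ≤ (K * My) * |ti - r| :=
            intervalIntegral.norm_integral_le_of_norm_le_const hb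
        _ ≤ K * My * hh := by
            rw [abs_of_nonneg (sub_nonneg.2 hr.2)]
            have h4 : ti - r ≤ hh := by rw [hhdef]; linarith [hr.1]
            exact mul_le_mul_of_nonneg_left h4 (mul_nonneg hK.le hMy0)
    have hMybd : ‖y1 w‖ ≤ 2*K' := by
      have h1 := hintbd w hw (‖y1 w‖) (fun u hu => hwmax hu)
      have h2 : ‖y1 w‖ ≤ ‖y1 w - Du (χ ti)‖ + ‖Du (χ ti)‖ := by
        simpa using norm_add_le (y1 w - Du (χ ti)) (Du (χ ti))
      have h3 := hDubd (χ ti)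
      linarith [h1, h2, h3, mul_le_mul_of_nonneg_right hKh hMynn]
    have hy1bd : ∀ u ∈ Icc t₀ ti, ‖y1 u‖ ≤ 2*K' := fun u hu => le_trans (hwmax hu) hMybd
    have hy1Du : ∀ r ∈ Icc t₀ ti, ‖y1 r - Du (χ ti)‖ ≤ K * (2*K') * hh :=
      fun r hr => hintbd r hr (2*K') hy1bd
    -- (e) main estimate
    set v : Fin d → ℝ := (fderiv ℝ (b ti) χb) (Du χb) with hvdef
    clear_value v
    have hGint : IntervalIntegrable (fun u => (fderiv ℝ (b u) (χ u)) (y1 u))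
        MeasureTheory.volume t ti :=
      ((hGc.mono (Icc_subset_Icc ht.1 le_rfl)).mono (by rw [uIcc_of_le ht.2])).intervalIntegrable
    have hsplit : y1 t - ybar t
        = (Du (χ ti) - Du χb) + ∫ u in t..ti, ((fderiv ℝ (b u) (χ u)) (y1 u) - v) := by
      rw [intervalIntegral.integral_sub hGint intervalIntegrable_const,
          intervalIntegral.integral_const, hy1eq t ht, hybar t]
      abel
    set Q : ℝ := K * (s + 3*K*hh*(1+‖x‖)) * (2*K')
        + K * (K * (2*K') * hh + K' * (K*hh*s + 2*K^2*hh^2*(1+‖x‖))) with hQdef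
    clear_value Q
    have hx1 : (0:ℝ) ≤ 1 + ‖x‖ := by positivity
    have hEχnn : 0 ≤ K*hh*s + 2*K^2*hh^2*(1+‖x‖) :=
      add_nonneg (mul_nonneg (mul_nonneg hK.le hhnn) hsnn)
        (mul_nonneg (mul_nonneg (by positivity) (sq_nonneg hh)) hx1)
    have hQnn : 0 ≤ Q := by
      rw [hQdef]
      have q0 : 0 ≤ 3*K*hh*(1+‖x‖) := mul_nonneg (mul_nonneg (by positivity) hhnn) hx1
      have q1 : 0 ≤ K * (s + 3*K*hh*(1+‖x‖)) * (2*K') :=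
        mul_nonneg (mul_nonneg hK.le (add_nonneg hsnn q0)) (by positivity)
      have q2 : 0 ≤ K * (2*K') * hh := mul_nonneg (by positivity) hhnn
      exact add_nonneg q1 (mul_nonneg hK.le (add_nonneg q2 (mul_nonneg hK'.le hEχnn)))
    have hptw : ∀ u ∈ Set.uIoc t ti, ‖(fderiv ℝ (b u) (χ u)) (y1 u) - v‖ ≤ Q := by
      intro u hu
      rw [uIoc_of_le ht.2] at hu
      have hu' : u ∈ Icc t₀ ti := ⟨le_trans ht.1 hu.1.le, hu.2⟩
      have hdecomp : (fderiv ℝ (b u) (χ u)) (y1 u) - v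
          = (fderiv ℝ (b u) (χ u) - fderiv ℝ (b ti) χb) (y1 u)
            + (fderiv ℝ (b ti) χb) (y1 u - Du χb) := by
        rw [hvdef]
        simp only [ContinuousLinearMap.sub_apply, map_sub]
        abel
      rw [hdecomp]
      have hterm1 : ‖(fderiv ℝ (b u) (χ u) - fderiv ℝ (b ti) χb) (y1 u)‖
          ≤ (K * (s + 3*K*hh*(1+‖x‖))) * (2*K') := by
        calc ‖(fderiv ℝ (b u) (χ u) - fderiv ℝ (b ti) χb) (y1 u)‖
            ≤ ‖fderiv ℝ (b u) (χ u) - fderiv ℝ (b ti) χb‖ * ‖y1 u‖ :=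
              ContinuousLinearMap.le_opNorm _ _
          _ ≤ (K * (s + 3*K*hh*(1+‖x‖))) * (2*K') := by
              apply mul_le_mul ?_ (hy1bd u hu') (norm_nonneg _) ?_
              · calc ‖fderiv ℝ (b u) (χ u) - fderiv ℝ (b ti) χb‖
                    ≤ K * (|u - ti| ^ ((1:ℝ)/2) + ‖χ u - χb‖) := hDbmod u ti (χ u) χb
                  _ ≤ K * (s + 3*K*hh*(1+‖x‖)) := by
                    have h1 : |u - ti| ^ ((1:ℝ)/2) ≤ s := by
                      rw [← Real.sqrt_eq_rpow, hsdef]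
                      apply Real.sqrt_le_sqrt
                      rw [abs_of_nonpos (by linarith [hu.2] : u - ti ≤ 0)]
                      rw [hhdef]; linarith [hu'.1]
                    have hbb : ‖x - χb‖ ≤ K*hh*(1+‖x‖) := by
                      rw [hχbdef, show x - (x + hh • b t₀ x) = -(hh • b t₀ x) by abel,
                        norm_neg, norm_smul, Real.norm_eq_abs, abs_of_nonneg hhnn]
                      calc hh * ‖b t₀ x‖ ≤ hh * (K * (1 + ‖x‖)) :=
                            mul_le_mul_of_nonneg_left (hbbd t₀ x) hhnn
                        _ = K*hh*(1+‖x‖) := by ring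
                    have h2 : ‖χ u - χb‖ ≤ 2*K*hh*(1+‖x‖) + K*hh*(1+‖x‖) := by
                      calc ‖χ u - χb‖ ≤ ‖χ u - x‖ + ‖x - χb‖ := by
                            simpa using norm_add_le (χ u - x) (x - χb)
                        _ ≤ _ := add_le_add (hχbd u hu') hbb
                    have h2' : ‖χ u - χb‖ ≤ 3*K*hh*(1+‖x‖) := by linarith
                    exact mul_le_mul_of_nonneg_left (add_le_add h1 h2') hK.le
              · have q0 : 0 ≤ 3*K*hh*(1+‖x‖) := mul_nonneg (mul_nonneg (by positivity) hhnn) hx1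
                exact mul_nonneg hK.le (add_nonneg hsnn q0)
      have hterm2 : ‖(fderiv ℝ (b ti) χb) (y1 u - Du χb)‖
          ≤ K * (K * (2*K') * hh + K' * (K*hh*s + 2*K^2*hh^2*(1+‖x‖))) := by
        calc ‖(fderiv ℝ (b ti) χb) (y1 u - Du χb)‖
            ≤ ‖fderiv ℝ (b ti) χb‖ * ‖y1 u - Du χb‖ := ContinuousLinearMap.le_opNorm _ _
          _ ≤ K * (K * (2*K') * hh + K' * (K*hh*s + 2*K^2*hh^2*(1+‖x‖))) := by
              apply mul_le_mul (hbK ti χb) ?_ (norm_nonneg _) hK.le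
              calc ‖y1 u - Du χb‖ ≤ ‖y1 u - Du (χ ti)‖ + ‖Du (χ ti) - Du χb‖ := by
                    simpa using norm_add_le (y1 u - Du (χ ti)) (Du (χ ti) - Du χb)
                _ ≤ K * (2*K') * hh + K' * (K*hh*s + 2*K^2*hh^2*(1+‖x‖)) := by
                    apply add_le_add (hy1Du u hu')
                    calc ‖Du (χ ti) - Du χb‖ ≤ K' * ‖χ ti - χb‖ := hDulip _ _
                      _ ≤ _ := mul_le_mul_of_nonneg_left hEχ hK'.le
      calc ‖(fderiv ℝ (b u) (χ u) - fderiv ℝ (b ti) χb) (y1 u)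
              + (fderiv ℝ (b ti) χb) (y1 u - Du χb)‖
          ≤ ‖(fderiv ℝ (b u) (χ u) - fderiv ℝ (b ti) χb) (y1 u)‖
              + ‖(fderiv ℝ (b ti) χb) (y1 u - Du χb)‖ := norm_add_le _ _
        _ ≤ Q := by rw [hQdef]; exact add_le_add hterm1 hterm2
    have hmain : ‖y1 t - ybar t‖ ≤ K' * (K*hh*s + 2*K^2*hh^2*(1+‖x‖)) + Q * hh := by
      rw [hsplit]
      have h1 : ‖Du (χ ti) - Du χb‖ ≤ K' * (K*hh*s + 2*K^2*hh^2*(1+‖x‖)) := by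
        calc ‖Du (χ ti) - Du χb‖ ≤ K' * ‖χ ti - χb‖ := hDulip _ _
          _ ≤ _ := mul_le_mul_of_nonneg_left hEχ hK'.le
      have h2 : ‖∫ u in t..ti, ((fderiv ℝ (b u) (χ u)) (y1 u) - v)‖ ≤ Q * hh := by
        calc ‖∫ u in t..ti, ((fderiv ℝ (b u) (χ u)) (y1 u) - v)‖ ≤ Q * |ti - t| :=
              intervalIntegral.norm_integral_le_of_norm_le_const hptw
          _ ≤ Q * hh := by
              rw [abs_of_nonneg (sub_nonneg.2 ht.2)]
              have h4 : ti - t ≤ hh := by rw [hhdef]; linarith [ht.1]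
              exact mul_le_mul_of_nonneg_left h4 hQnn
      calc ‖(Du (χ ti) - Du χb) + ∫ u in t..ti, ((fderiv ℝ (b u) (χ u)) (y1 u) - v)‖
          ≤ ‖Du (χ ti) - Du χb‖ + ‖∫ u in t..ti, ((fderiv ℝ (b u) (χ u)) (y1 u) - v)‖ :=
            norm_add_le _ _
        _ ≤ _ := add_le_add h1 h2
    have hfinal : K' * (K*hh*s + 2*K^2*hh^2*(1+‖x‖)) + Q * hh
        ≤ C₁ * (s^3 * (1 + ‖x‖ * s)) := by
      rw [hQdef, hC₁def, ← hs2]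
      have hone : (1:ℝ) ≤ 1 + ‖x‖ * s := by
        linarith [mul_nonneg hxnn hsnn]
      have m1 : s^3 ≤ s^3 * (1 + ‖x‖ * s) := le_mul_of_one_le_right (pow_nonneg hsnn 3) hone
      have m3a : s^4 ≤ s^3 := pow_le_pow_of_le_one hsnn hs1 (by norm_num)
      have m3 : s^4 ≤ s^3 * (1 + ‖x‖ * s) := le_trans m3a m1
      have m2 : s^4 * (1+‖x‖) ≤ s^3 * (1 + ‖x‖ * s) := by nlinarith [m3a]
      have m4 : s^5 ≤ s^3 * (1 + ‖x‖ * s) :=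
        le_trans (pow_le_pow_of_le_one hsnn hs1 (by norm_num)) m1
      have m5 : s^6 * (1+‖x‖) ≤ s^3 * (1 + ‖x‖ * s) := by
        have h6 : s^6 * (1+‖x‖) ≤ s^4 * (1+‖x‖) :=
          mul_le_mul_of_nonneg_right (pow_le_pow_of_le_one hsnn hs1 (by norm_num)) hx1
        exact le_trans h6 m2
      have expand : K' * (K*(s^2)*s + 2*K^2*(s^2)^2*(1+‖x‖))
          + (K * (s + 3*K*(s^2)*(1+‖x‖)) * (2*K')
            + K * (K * (2*K') * (s^2) + K' * (K*(s^2)*s + 2*K^2*(s^2)^2*(1+‖x‖)))) * (s^2)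
          = (3*K*K')*s^3 + (8*K'*K^2)*(s^4*(1+‖x‖)) + (2*K^2*K')*s^4 + (K^2*K')*s^5
            + (2*K^3*K')*(s^6*(1+‖x‖)) := by ring
      rw [expand]
      have hsum : (3*K*K')*s^3 + (8*K'*K^2)*(s^4*(1+‖x‖)) + (2*K^2*K')*s^4 + (K^2*K')*s^5
            + (2*K^3*K')*(s^6*(1+‖x‖))
          ≤ (3*K*K')*(s^3 * (1 + ‖x‖ * s)) + (8*K'*K^2)*(s^3 * (1 + ‖x‖ * s))
            + (2*K^2*K')*(s^3 * (1 + ‖x‖ * s)) + (K^2*K')*(s^3 * (1 + ‖x‖ * s))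
            + (2*K^3*K')*(s^3 * (1 + ‖x‖ * s)) := by
        apply add_le_add
        apply add_le_add
        apply add_le_add
        apply add_le_add
        · exact mul_le_mul_of_nonneg_left m1 (by positivity)
        · exact mul_le_mul_of_nonneg_left m2 (by positivity)
        · exact mul_le_mul_of_nonneg_left m3 (by positivity)
        · exact mul_le_mul_of_nonneg_left m4 (by positivity)
        · exact mul_le_mul_of_nonneg_left m5 (by positivity)
      calc _ ≤ _ := hsum
        _ = (3*K'*K + 11*K'*K^2 + 2*K'*K^3) * (s^3 * (1 + ‖x‖ * s)) := by ring
    have hT : 0 ≤ s^3*(1+‖x‖*s) :=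
      mul_nonneg (pow_nonneg hsnn 3) (add_nonneg zero_le_one (mul_nonneg hxnn hsnn))
    rw [h32]
    calc ‖y1 t - ybar t‖ ≤ C₁ * (s^3*(1+‖x‖*s)) := le_trans hmain hfinal
      _ ≤ (C₁ + 2*K'/h₀^((3:ℝ)/2) + 1) * (s^3*(1+‖x‖*s)) :=
          mul_le_mul_of_nonneg_right (by linarith) hT
      _ ≤ (C₁ + 2*K'/h₀^((3:ℝ)/2) + 1) * (s^3*(1+‖x‖*s)) * Real.exp (K*hh) :=
          le_mul_of_one_le_right (mul_nonneg (by linarith) hT) hexp1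
      _ = (C₁ + 2*K'/h₀^((3:ℝ)/2) + 1) * s^3 * (1+‖x‖*s) * Real.exp (K*hh) := by ring
  · -- large step size
    have hineqy : ∀ r ∈ Icc t₀ ti, ‖y1 r‖ ≤ K' + K * ∫ u in r..ti, ‖y1 u‖ := by
      intro r hr
      have hGnormint : IntervalIntegrable (fun u => ‖(fderiv ℝ (b u) (χ u)) (y1 u)‖)
          MeasureTheory.volume r ti :=
        ((hGc.norm.mono (Icc_subset_Icc hr.1 le_rfl)).mono
          (by rw [uIcc_of_le hr.2])).intervalIntegrable
      have hKy1int : IntervalIntegrable (fun u => K * ‖y1 u‖) MeasureTheory.volume r ti :=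
        (((continuousOn_const.mul hy1c.norm).mono (Icc_subset_Icc hr.1 le_rfl)).mono
          (by rw [uIcc_of_le hr.2])).intervalIntegrable
      have h1 : ‖y1 r‖ ≤ K' + ‖∫ u in r..ti, (fderiv ℝ (b u) (χ u)) (y1 u)‖ := by
        rw [hy1eq r hr]
        calc ‖Du (χ ti) + ∫ u in r..ti, (fderiv ℝ (b u) (χ u)) (y1 u)‖
            ≤ ‖Du (χ ti)‖ + ‖∫ u in r..ti, (fderiv ℝ (b u) (χ u)) (y1 u)‖ := norm_add_le _ _
          _ ≤ _ := add_le_add_left (hDubd _) _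
      have h2 : ‖∫ u in r..ti, (fderiv ℝ (b u) (χ u)) (y1 u)‖
          ≤ ∫ u in r..ti, ‖(fderiv ℝ (b u) (χ u)) (y1 u)‖ :=
        intervalIntegral.norm_integral_le_integral_norm hr.2
      have h3 : (∫ u in r..ti, ‖(fderiv ℝ (b u) (χ u)) (y1 u)‖) ≤ ∫ u in r..ti, K * ‖y1 u‖ := by
        apply intervalIntegral.integral_mono_on hr.2 hGnormint hKy1int
        intro u hu
        have hu' : u ∈ Icc t₀ ti := ⟨le_trans hr.1 hu.1, hu.2⟩
        calc ‖(fderiv ℝ (b u) (χ u)) (y1 u)‖ ≤ ‖fderiv ℝ (b u) (χ u)‖ * ‖y1 u‖ :=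
              ContinuousLinearMap.le_opNorm _ _
          _ ≤ K * ‖y1 u‖ := mul_le_mul_of_nonneg_right (hbK u (χ u)) (norm_nonneg _)
      rw [intervalIntegral.integral_const_mul] at h3
      linarith
    have hy1exp := gronwall_integral hti hy1c.norm hK.le hineqy
    have hb1 : ‖y1 t‖ ≤ K' * Real.exp (K * hh) := by
      have h1 := hy1exp t ht
      have h2 : Real.exp (K * (ti - t)) ≤ Real.exp (K * hh) := by
        apply Real.exp_le_exp.2
        apply mul_le_mul_of_nonneg_left ?_ hK.le
        rw [hhdef]; linarith [ht.1]
      linarith [h1, mul_le_mul_of_nonneg_left h2 hK'.le]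
    have hb2 : ‖ybar t‖ ≤ K' * Real.exp (K * hh) := by
      rw [hybar t]
      have hstep : ‖(ti - t) • (fderiv ℝ (b ti) (x + hh • b t₀ x)) (Du (x + hh • b t₀ x))‖
          ≤ (ti - t) * (K * K') := by
        rw [norm_smul, Real.norm_eq_abs, abs_of_nonneg (sub_nonneg.2 ht.2)]
        apply mul_le_mul_of_nonneg_left ?_ (sub_nonneg.2 ht.2)
        calc ‖(fderiv ℝ (b ti) (x + hh • b t₀ x)) (Du (x + hh • b t₀ x))‖
            ≤ ‖fderiv ℝ (b ti) (x + hh • b t₀ x)‖ * ‖Du (x + hh • b t₀ x)‖ :=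
              ContinuousLinearMap.le_opNorm _ _
          _ ≤ K * K' := mul_le_mul (hbK _ _) (hDubd _) (norm_nonneg _) hK.le
      have htih : ti - t ≤ hh := by rw [hhdef]; linarith [ht.1]
      have hexp2 := Real.add_one_le_exp (K * hh)
      calc ‖Du (x + hh • b t₀ x)
              + (ti - t) • (fderiv ℝ (b ti) (x + hh • b t₀ x)) (Du (x + hh • b t₀ x))‖
          ≤ ‖Du (x + hh • b t₀ x)‖
              + ‖(ti - t) • (fderiv ℝ (b ti) (x + hh • b t₀ x)) (Du (x + hh • b t₀ x))‖ :=
            norm_add_le _ _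
        _ ≤ K' + (ti - t) * (K * K') := add_le_add (hDubd _) hstep
        _ ≤ K' * Real.exp (K * hh) := by
            have e1 : (ti - t) * (K * K') ≤ hh * (K * K') :=
              mul_le_mul_of_nonneg_right htih (mul_nonneg hK.le hK'.le)
            have e2 : K' * (K * hh + 1) ≤ K' * Real.exp (K * hh) :=
              mul_le_mul_of_nonneg_left hexp2 hK'.le
            linarith [e1, e2]
    have hLHS : ‖y1 t - ybar t‖ ≤ 2 * K' * Real.exp (K * hh) := by
      calc ‖y1 t - ybar t‖ ≤ ‖y1 t‖ + ‖ybar t‖ := norm_sub_le _ _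
        _ ≤ _ := by linarith
    have hrpow : h₀ ^ ((3:ℝ)/2) ≤ hh ^ ((3:ℝ)/2) :=
      Real.rpow_le_rpow hh₀pos.le hcase.le (by norm_num)
    have hh₀32pos : 0 < h₀ ^ ((3:ℝ)/2) := Real.rpow_pos_of_pos hh₀pos _
    have hC2 : 2*K' ≤ (C₁ + 2*K'/h₀^((3:ℝ)/2) + 1) * hh ^ ((3:ℝ)/2) := by
      have e1 : (2*K'/h₀^((3:ℝ)/2)) * h₀^((3:ℝ)/2) = 2*K' :=
        div_mul_cancel₀ _ (ne_of_gt hh₀32pos)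
      have e2 : (2*K'/h₀^((3:ℝ)/2)) * h₀^((3:ℝ)/2) ≤ (2*K'/h₀^((3:ℝ)/2)) * hh^((3:ℝ)/2) :=
        mul_le_mul_of_nonneg_left hrpow hCbig
      have e3 : (2*K'/h₀^((3:ℝ)/2)) * hh^((3:ℝ)/2)
          ≤ (C₁ + 2*K'/h₀^((3:ℝ)/2) + 1) * hh^((3:ℝ)/2) :=
        mul_le_mul_of_nonneg_right (by linarith) (Real.rpow_nonneg hhnn _)
      linarith
    have hAnn : 0 ≤ (C₁ + 2*K'/h₀^((3:ℝ)/2) + 1) * hh^((3:ℝ)/2) :=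
      mul_nonneg (by linarith) (Real.rpow_nonneg hhnn _)
    have h1s : (1:ℝ) ≤ 1 + ‖x‖ * s := by linarith [mul_nonneg hxnn hsnn]
    calc ‖y1 t - ybar t‖ ≤ 2*K' * Real.exp (K*hh) := hLHS
      _ ≤ ((C₁ + 2*K'/h₀^((3:ℝ)/2) + 1) * hh^((3:ℝ)/2)) * Real.exp (K*hh) :=
          mul_le_mul_of_nonneg_right hC2 (Real.exp_pos _).le
      _ ≤ (C₁ + 2*K'/h₀^((3:ℝ)/2) + 1) * hh^((3:ℝ)/2) * (1 + ‖x‖ * s) * Real.exp (K*hh) :=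
          mul_le_mul_of_nonneg_right (le_mul_of_one_le_right hAnn h1s) (Real.exp_pos _).le
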